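/- Let A ∈ SL₂(ℤ) with |trace(A)| > 2. Then the semidirect product G = ℤ² ⋊_A ℤ is solvable, torsion-free, and not virtually nilpotent: no finite index subgroup of G is nilpotent. -/

import Mathlib

/-!
The semidirect product `ℤ² ⋊_A ℤ` of torsion-free abelian groups is solvable and torsion-free.
A finite index subgroup `H` contains some `(v, 0)` and `(0, t)` with `v ≠ 0`, `t ≠ 0`. An element
`(w, k)` of the center of `H` commutes with `(v, 0)`, so `Aᵏ v = v`; once `k = 0`, commuting with
`(0, t)` gives `Aᵗ w = w`. But for `k ≠ 0` the power `Aᵏ` fixes no nonzero vector: the recurrence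
`tr Aⁿ⁺² = tr A · tr Aⁿ⁺¹ - tr Aⁿ` (Cayley–Hamilton) makes `|tr Aⁿ|` strictly increasing, hence
`det (Aᵏ - 1) = 2 - tr Aᵏ ≠ 0`. So the center of `H` is trivial, while a nontrivial nilpotent
group has nontrivial center.
-/

/-- The automorphism of `ℤ²` (written multiplicatively) induced by a linear
automorphism `e` of `ℤ²`. -/
def solAut (e : (Fin 2 → ℤ) ≃ₗ[ℤ] (Fin 2 → ℤ)) :
    MulAut (Multiplicative (Fin 2 → ℤ)) :=
  AddEquiv.toMultiplicative e.toAddEquiv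

/-- The action of `ℤ` on `ℤ²` by powers of the automorphism `e`. -/
def solAction (e : (Fin 2 → ℤ) ≃ₗ[ℤ] (Fin 2 → ℤ)) :
    Multiplicative ℤ →* MulAut (Multiplicative (Fin 2 → ℤ)) :=
  zpowersHom _ (solAut e)

/-- The Sol 3-manifold group `ℤ² ⋊_A ℤ` associated to `A = e`. -/
abbrev SolGroup (e : (Fin 2 → ℤ) ≃ₗ[ℤ] (Fin 2 → ℤ)) :=
  SemidirectProduct (Multiplicative (Fin 2 → ℤ)) (Multiplicative ℤ) (solAction e)

theorem strictMono_abs_of_eq_mul_sub {R : Type*} [CommRing R] [LinearOrder R]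
    [IsStrictOrderedRing R] {s : ℕ → R} {t : R} (ht : 2 ≤ |t|) (hs : |s 0| < |s 1|)
    (hrec : ∀ n, s (n + 2) = t * s (n + 1) - s n) : StrictMono fun n ↦ |s n| := by
  refine strictMono_nat_of_lt_succ fun n ↦ ?_
  induction n with
  | zero => exact hs
  | succ n ih =>
    have hlower : |t| * |s (n + 1)| - |s n| ≤ |s (n + 2)| := by
      rw [hrec, ← abs_mul]
      exact abs_sub_abs_le_abs_sub _ _
    show |s (n + 1)| < |s (n + 2)|
    linarith [mul_le_mul_of_nonneg_right ht (abs_nonneg (s (n + 1)))]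

namespace Matrix

variable {R : Type*} [CommRing R] {M : Matrix (Fin 2) (Fin 2) R}

theorem sq_eq_trace_smul_sub_one (hM : M.det = 1) : M ^ 2 = M.trace • M - 1 := by
  nontriviality R
  have := M.aeval_self_charpoly
  rw [charpoly_fin_two, hM] at this
  simp only [map_pow, Polynomial.aeval_X, map_mul, Polynomial.aeval_C, map_one, map_sub,
    map_add] at this
  rw [← Algebra.smul_def] at this
  rw [eq_sub_iff_add_eq, ← sub_eq_zero, ← this]
  abel

theorem trace_pow_add_two (hM : M.det = 1) (n : ℕ) :
    (M ^ (n + 2)).trace = M.trace * (M ^ (n + 1)).trace - (M ^ n).trace := by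
  rw [pow_add, sq_eq_trace_smul_sub_one hM, mul_sub, mul_smul_comm, mul_one, ← pow_succ,
    trace_sub, trace_smul, smul_eq_mul]

theorem det_sub_one_of_det_eq_one (hM : M.det = 1) : (M - 1).det = 2 - M.trace := by
  rw [det_fin_two] at hM ⊢
  simp [trace_fin_two]
  linear_combination hM

section Ordered

variable [LinearOrder R] [IsStrictOrderedRing R]

theorem two_lt_abs_trace_pow (hM : M.det = 1) (htr : 2 < |M.trace|) {n : ℕ} (hn : n ≠ 0) :
    2 < |(M ^ n).trace| := by
  have hmono : StrictMono fun n ↦ |(M ^ n).trace| :=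
    strictMono_abs_of_eq_mul_sub (s := fun n ↦ (M ^ n).trace) htr.le
      (by simpa using htr) (trace_pow_add_two hM)
  simpa using hmono (Nat.pos_of_ne_zero hn)

theorem eq_zero_of_pow_mulVec_eq_self (hM : M.det = 1) (htr : 2 < |M.trace|) {n : ℕ}
    (hn : n ≠ 0) {v : Fin 2 → R} (hv : M ^ n *ᵥ v = v) : v = 0 := by
  by_contra hv0
  have hdet : (M ^ n - 1).det = 0 :=
    exists_mulVec_eq_zero_iff.mp ⟨v, hv0, by rw [sub_mulVec, hv, one_mulVec, sub_self]⟩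
  rw [det_sub_one_of_det_eq_one (by rw [det_pow, hM, one_pow]), sub_eq_zero] at hdet
  have := two_lt_abs_trace_pow hM htr hn
  rw [← hdet, abs_two] at this
  exact this.false

end Ordered

end Matrix

open Matrix in
theorem LinearEquiv.eq_zero_of_zpow_apply_eq_self {R : Type*} [CommRing R] [LinearOrder R]
    [IsStrictOrderedRing R] (e : (Fin 2 → R) ≃ₗ[R] (Fin 2 → R))
    (hdet : LinearMap.det (e : (Fin 2 → R) →ₗ[R] (Fin 2 → R)) = 1)
    (htr : 2 < |LinearMap.trace R (Fin 2 → R) (e : (Fin 2 → R) →ₗ[R] (Fin 2 → R))|)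
    {k : ℤ} (hk : k ≠ 0) {v : Fin 2 → R} (hv : (e ^ k) v = v) : v = 0 := by
  obtain ⟨M, hM⟩ := toLin'.surjective (e : (Fin 2 → R) →ₗ[R] (Fin 2 → R))
  have hpow (n : ℕ) (w : Fin 2 → R) : (e ^ n) w = M ^ n *ᵥ w := by
    rw [← toLin'_apply, toLin'_pow, hM, LinearEquiv.pow_apply, Module.End.pow_apply]
    rfl
  rw [← hM, LinearMap.det_toLin'] at hdet
  rw [← hM, trace_toLin'_eq] at htr
  obtain ⟨n, hn, hvn⟩ : ∃ n : ℕ, n ≠ 0 ∧ (e ^ n) v = v := by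
    obtain ⟨n, rfl | rfl⟩ := Int.eq_nat_or_neg k
    · exact ⟨n, by omega, by rwa [zpow_natCast] at hv⟩
    · rw [_root_.zpow_neg, zpow_natCast] at hv
      exact ⟨n, by omega, (inv_smul_eq_iff (g := e ^ n) (a := v) (b := v) |>.mp hv).symm⟩
  rw [hpow] at hvn
  exact eq_zero_of_pow_mulVec_eq_self hdet htr hn hvn

theorem Subgroup.upperCentralSeries_eq_bot_of_center_eq_bot {G : Type*} [Group G]
    (h : center G = ⊥) (n : ℕ) : upperCentralSeries G n = ⊥ := by
  induction n with
  | zero => rfl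
  | succ n ih =>
    ext x
    simp only [mem_upperCentralSeries_succ_iff, ih, mem_bot, commutatorElement_eq_one_iff_mul_comm]
    rw [← mem_bot, ← h, mem_center_iff]
    exact forall_congr' fun _ ↦ eq_comm

theorem Group.IsNilpotent.subsingleton_of_center_eq_bot {G : Type*} [Group G] [IsNilpotent G]
    (h : Subgroup.center G = ⊥) : Subsingleton G := by
  obtain ⟨n, hn⟩ := IsNilpotent.nilpotent G
  rw [Subgroup.upperCentralSeries_eq_bot_of_center_eq_bot h] at hn
  exact Subgroup.subsingleton_iff.mp (subsingleton_iff_bot_eq_top.mp hn)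

namespace SemidirectProduct

variable {N G : Type*} [Group G]

instance isSolvable [Group N] {φ : G →* MulAut N} [Group.IsSolvable N] [Group.IsSolvable G] :
    Group.IsSolvable (N ⋊[φ] G) :=
  Group.isSolvable_of_ker_le_range inl rightHom range_inl_eq_ker_rightHom.ge

theorem eq_one_of_isOfFinOrder [Group N] {φ : G →* MulAut N} [IsMulTorsionFree N]
    [IsMulTorsionFree G] {g : N ⋊[φ] G} (hfin : IsOfFinOrder g) : g = 1 := by
  have hright : g.right = 1 := (rightHom.isOfFinOrder hfin).eq_one'
  have hleft : g.left = 1 := by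
    refine IsOfFinOrder.eq_one' ((inl_injective (φ := φ)).isOfFinOrder_iff.mp ?_)
    rwa [← inl_left_mul_inr_right g, hright, map_one, mul_one] at hfin
  ext <;> simp [hleft, hright]

variable [CommGroup N] {φ : G →* MulAut N}

theorem commute_inl_iff {n : N} {g : N ⋊[φ] G} : Commute (inl n) g ↔ φ g.right n = n := by
  rw [Commute, SemiconjBy, SemidirectProduct.ext_iff]
  simp [mul_comm g.left, eq_comm]

theorem center_eq_bot_of_fixedPointFree (hφ : ∀ g ≠ 1, MonoidHom.FixedPointFree (φ g))
    {H : Subgroup (N ⋊[φ] G)} {n : N} (hn : n ≠ 1) (hnH : inl n ∈ H) {g : G} (hg : g ≠ 1)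
    (hgH : inr g ∈ H) : Subgroup.center H = ⊥ := by
  refine eq_bot_iff.mpr fun ⟨z, hzH⟩ hz ↦ ?_
  have hcomm (x : N ⋊[φ] G) (hx : x ∈ H) : Commute x z :=
    congrArg Subtype.val (Subgroup.mem_center_iff.mp hz ⟨x, hx⟩)
  have hright : z.right = 1 := by
    by_contra hright_ne
    exact hn (hφ _ hright_ne n (commute_inl_iff.mp (hcomm _ hnH)))
  have hz_eq : z = inl z.left := by
    rw [← inl_left_mul_inr_right z, hright, map_one, mul_one, left_inl]
  have hleft : z.left = 1 := by
    have hcomm' : Commute (inl z.left) (inr g) := hz_eq ▸ (hcomm _ hgH).symm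
    exact hφ g hg _ (commute_inl_iff.mp hcomm')
  exact Subgroup.mem_bot.mpr (Subtype.ext (SemidirectProduct.ext hleft hright))

theorem not_isVirtuallyNilpotent [IsMulTorsionFree N] [IsMulTorsionFree G] [Nontrivial N]
    [Nontrivial G] (hφ : ∀ g ≠ 1, MonoidHom.FixedPointFree (φ g)) :
    ¬ Group.IsVirtuallyNilpotent (N ⋊[φ] G) := by
  rintro ⟨H, hnil, hfin⟩
  obtain ⟨n, hn⟩ := exists_ne (1 : N)
  obtain ⟨g, hg⟩ := exists_ne (1 : G)
  obtain ⟨k, hk, -, hkH⟩ := H.exists_pow_mem_of_index_ne_zero hfin.index_ne_zero (inl n)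
  obtain ⟨l, hl, -, hlH⟩ := H.exists_pow_mem_of_index_ne_zero hfin.index_ne_zero (inr g)
  rw [← map_pow] at hkH hlH
  have hnk : n ^ k ≠ 1 := (pow_eq_one_iff_left hk.ne').not.mpr hn
  have hgl : g ^ l ≠ 1 := (pow_eq_one_iff_left hl.ne').not.mpr hg
  have := Group.IsNilpotent.subsingleton_of_center_eq_bot
    (center_eq_bot_of_fixedPointFree hφ hnk hkH hgl hlH)
  exact hnk (inl_injective (congrArg Subtype.val (Subsingleton.elim (⟨_, hkH⟩ : H) 1)))

end SemidirectProduct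

theorem solAction_ofAdd_apply (e : (Fin 2 → ℤ) ≃ₗ[ℤ] (Fin 2 → ℤ)) (k : ℤ) (v : Fin 2 → ℤ) :
    solAction e (.ofAdd k) (.ofAdd v) = .ofAdd ((e ^ k) v) := by
  let toMulAut : ((Fin 2 → ℤ) ≃ₗ[ℤ] (Fin 2 → ℤ)) →* MulAut (Multiplicative (Fin 2 → ℤ)) :=
    { toFun f := AddEquiv.toMultiplicative f.toAddEquiv
      map_one' := rfl
      map_mul' _ _ := rfl }
  change (toMulAut e ^ k) _ = _
  rw [← map_zpow]
  rfl

theorem solAction_fixedPointFree (e : (Fin 2 → ℤ) ≃ₗ[ℤ] (Fin 2 → ℤ))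
    (hdet : LinearMap.det (e : (Fin 2 → ℤ) →ₗ[ℤ] (Fin 2 → ℤ)) = 1)
    (htr : 2 < |LinearMap.trace ℤ (Fin 2 → ℤ) (e : (Fin 2 → ℤ) →ₗ[ℤ] (Fin 2 → ℤ))|)
    {g : Multiplicative ℤ} (hg : g ≠ 1) : MonoidHom.FixedPointFree (solAction e g) := by
  intro x hx
  rw [← ofAdd_toAdd g, ← ofAdd_toAdd x, solAction_ofAdd_apply] at hx
  rw [← toAdd_eq_zero]
  exact e.eq_zero_of_zpow_apply_eq_self hdet htr (toAdd_eq_zero.not.mpr hg)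
    (Multiplicative.ofAdd.injective hx)

/-- Let `A ∈ SL₂(ℤ)` with `|trace A| > 2`.  Then the semidirect product
`G = ℤ² ⋊_A ℤ` is solvable, torsion-free, and not virtually nilpotent: no finite
index subgroup of `G` is nilpotent. -/
theorem solGroup_solvable_torsionFree_not_virtually_nilpotent
    (e : (Fin 2 → ℤ) ≃ₗ[ℤ] (Fin 2 → ℤ))
    (hdet : LinearMap.det (e : (Fin 2 → ℤ) →ₗ[ℤ] (Fin 2 → ℤ)) = 1)
    (htr : 2 < |LinearMap.trace ℤ (Fin 2 → ℤ) (e : (Fin 2 → ℤ) →ₗ[ℤ] (Fin 2 → ℤ))|) :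
    IsSolvable (SolGroup e) ∧ (∀ g : SolGroup e, g ≠ 1 → ¬IsOfFinOrder g) ∧
    ¬ ∃ H : Subgroup (SolGroup e), H.FiniteIndex ∧ Group.IsNilpotent H := by
  refine ⟨(inferInstance : Group.IsSolvable (SolGroup e)),
    fun g hg hfin ↦ hg (SemidirectProduct.eq_one_of_isOfFinOrder hfin), ?_⟩
  rintro ⟨H, hfin, hnil⟩
  exact SemidirectProduct.not_isVirtuallyNilpotent
    (fun _ hg ↦ solAction_fixedPointFree e hdet htr hg) ⟨H, hnil, hfin⟩
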